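/- Suppose σσᵀ = λ g R⁻¹ gᵀ for a constant λ > 0, and let J = -λ log ξ for a positive, sufficiently smooth function ξ. Then J satisfies the nonlinear HJB equation -∂_t J = -(1/2)(∂_x J)ᵀ g R⁻¹ gᵀ ∂_x J + V + fᵀ∂_x J + (1/2)Tr(σσᵀ ∂²_x J) if and only if ξ satisfies the linear PDE ∂_t ξ = (V/λ)ξ - fᵀ∂_x ξ - (1/2)Tr(σσᵀ ∂²_x ξ). -/

import Mathlib

/-! With `s = ξ`, `p = ∂ₓξ`, the chain rule gives `∂ₜJ = -λ ∂ₜξ / s`, `∂ₓJ = -(λ / s) p` and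
`∂²ₓJ = -(λ / s) ∂²ₓξ + (λ / s²) p pᵀ`. Substituting into the HJB equation, the rank-one part of
the Hessian contributes `(λ² / 2s²) pᵀ g R⁻¹ gᵀ p` through `σσᵀ = λ g R⁻¹ gᵀ`, which cancels the
quadratic term; what remains is `λ / s` times the linear equation for `ξ`. -/

open Matrix

/-- Spatial gradient of a scalar field on ℝⁿ, as a column vector. -/
noncomputable def grad {n : ℕ} (f : (Fin n → ℝ) → ℝ) (x : Fin n → ℝ) : Fin n → ℝ :=
  fun i => fderiv ℝ f x (Pi.single i 1)

/-- Spatial Hessian of a scalar field on ℝⁿ, as a matrix. -/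
noncomputable def hess {n : ℕ} (f : (Fin n → ℝ) → ℝ) (x : Fin n → ℝ) :
    Matrix (Fin n) (Fin n) ℝ :=
  Matrix.of fun i j =>
    fderiv ℝ (fun y => fderiv ℝ f y (Pi.single j 1)) x (Pi.single i 1)

open Real

lemma fderiv_const_mul_log {E : Type*} [NormedAddCommGroup E] [NormedSpace ℝ E]
    {φ : E → ℝ} {x : E} (c : ℝ) (hφ : DifferentiableAt ℝ φ x) (hx : φ x ≠ 0) :
    fderiv ℝ (fun y => c * log (φ y)) x = (c / φ x) • fderiv ℝ φ x := by
  rw [fderiv_const_mul (hφ.log hx), fderiv.log hφ hx, smul_smul, div_eq_mul_inv]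

lemma grad_const_mul_log {n : ℕ} {φ : (Fin n → ℝ) → ℝ} {x : Fin n → ℝ} (c : ℝ)
    (hφ : DifferentiableAt ℝ φ x) (hx : φ x ≠ 0) :
    grad (fun y => c * log (φ y)) x = (c / φ x) • grad φ x := by
  ext i
  simp only [grad, fderiv_const_mul_log c hφ hx, _root_.smul_apply, Pi.smul_apply]

lemma hess_const_mul_log {n : ℕ} {φ : (Fin n → ℝ) → ℝ} (c : ℝ) (hφ : ContDiff ℝ 2 φ)
    (hφ0 : ∀ y, φ y ≠ 0) (x : Fin n → ℝ) :
    hess (fun y => c * log (φ y)) x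
      = (c / φ x) • hess φ x - (c / φ x ^ 2) • vecMulVec (grad φ x) (grad φ x) := by
  have hdiff : Differentiable ℝ φ := hφ.differentiable (by norm_num)
  have hDφ : Differentiable ℝ (fderiv ℝ φ) :=
    (hφ.fderiv_right (m := 1) (by norm_num)).differentiable one_ne_zero
  have hinv : HasFDerivAt (fun y => (φ y)⁻¹) (-(φ x ^ 2)⁻¹ • fderiv ℝ φ x) x :=
    (hasDerivAt_inv (hφ0 x)).comp_hasFDerivAt x (hdiff x).hasFDerivAt
  ext i j
  have hpartial : (fun y => fderiv ℝ (fun z => c * log (φ z)) y (Pi.single j 1))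
      = fun y => c * ((φ y)⁻¹ * fderiv ℝ φ y (Pi.single j 1)) := by
    funext y
    rw [fderiv_const_mul_log c (hdiff y) (hφ0 y)]
    simp only [_root_.smul_apply, smul_eq_mul, div_eq_mul_inv, mul_assoc]
  have hj := ((hDφ x).clm_apply (differentiableAt_const (Pi.single j (1 : ℝ)))).hasFDerivAt
  have hprod : HasFDerivAt (fun y => c * ((φ y)⁻¹ * fderiv ℝ φ y (Pi.single j 1))) _ x :=
    (hinv.mul hj).const_mul c
  rw [Matrix.sub_apply, Matrix.smul_apply, Matrix.smul_apply, vecMulVec_apply]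
  simp only [hess, of_apply, hpartial]
  rw [hprod.fderiv]
  simp only [_root_.smul_apply, _root_.add_apply, smul_eq_mul, grad]
  field_simp
  ring

lemma trace_mul_vecMulVec_self {n : Type*} [Fintype n] (M : Matrix n n ℝ) (p : n → ℝ) :
    trace (M * vecMulVec p p) = p ⬝ᵥ M *ᵥ p := by
  rw [mul_vecMulVec, trace_vecMulVec, dotProduct_comm]

lemma coleHopf_pointwise_iff {n : Type*} [Fintype n] (M H : Matrix n n ℝ) (p b : n → ℝ)
    {lam s : ℝ} (V d : ℝ) (hlam : lam ≠ 0) (hs : s ≠ 0) :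
    (-(-lam * (d / s))
        = -(1/2) * ((-lam / s) • p ⬝ᵥ M *ᵥ ((-lam / s) • p)) + V + b ⬝ᵥ ((-lam / s) • p)
          + (1/2) * trace (lam • M * ((-lam / s) • H - (-lam / s ^ 2) • vecMulVec p p)))
      ↔ d = V / lam * s - b ⬝ᵥ p - (1/2) * trace (lam • M * H) := by
  simp only [mulVec_smul, dotProduct_smul, smul_dotProduct, mul_sub, Matrix.mul_smul, trace_sub,
    trace_smul, smul_mul, trace_mul_vecMulVec_self, smul_eq_mul]
  constructor <;> intro h
  · field_simp at h ⊢
    apply mul_left_cancel₀ hs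
    linear_combination h
  · rw [h]; field_simp; ring

theorem stmt3_general {n m k : ℕ}
    (f : (Fin n → ℝ) → ℝ → (Fin n → ℝ))
    (g : (Fin n → ℝ) → ℝ → Matrix (Fin n) (Fin m) ℝ)
    (σ : (Fin n → ℝ) → ℝ → Matrix (Fin n) (Fin k) ℝ)
    (V : (Fin n → ℝ) → ℝ → ℝ)
    (R : (Fin n → ℝ) → ℝ → Matrix (Fin m) (Fin m) ℝ)
    (lam : ℝ) (hlam : 0 < lam)
    (hcond : ∀ x t, σ x t * (σ x t)ᵀ = lam • (g x t * (R x t)⁻¹ * (g x t)ᵀ))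
    (ξ : (Fin n → ℝ) → ℝ → ℝ) (hpos : ∀ x t, 0 < ξ x t)
    (hξx : ∀ t, ContDiff ℝ 2 (fun x => ξ x t))
    (hξt : ∀ x, ContDiff ℝ 1 (ξ x))
    (J : (Fin n → ℝ) → ℝ → ℝ)
    (hJ : J = fun x t => -lam * Real.log (ξ x t)) :
    ∀ (x : Fin n → ℝ) (t : ℝ),
      (-(deriv (J x) t)
          = -(1/2) * ((grad (fun y => J y t) x) ⬝ᵥ
                (g x t * (R x t)⁻¹ * (g x t)ᵀ).mulVec (grad (fun y => J y t) x))
            + V x t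
            + (f x t ⬝ᵥ grad (fun y => J y t) x)
            + (1/2) * Matrix.trace (σ x t * (σ x t)ᵀ * hess (fun y => J y t) x))
      ↔
      (deriv (ξ x) t
          = (V x t / lam) * ξ x t
            - (f x t ⬝ᵥ grad (fun y => ξ y t) x)
            - (1/2) * Matrix.trace (σ x t * (σ x t)ᵀ * hess (fun y => ξ y t) x)) := by
  subst hJ
  intro x t
  have hξ0 : ∀ y, ξ y t ≠ 0 := fun y => (hpos y t).ne'
  have hξt' : DifferentiableAt ℝ (ξ x) t := (hξt x).differentiable one_ne_zero t
  have hJt : deriv (fun s => -lam * log (ξ x s)) t = -lam * (deriv (ξ x) t / ξ x t) := by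
    rw [deriv_const_mul _ (hξt'.log (hξ0 x)), deriv.log hξt' (hξ0 x)]
  rw [hJt, grad_const_mul_log (-lam) ((hξx t).differentiable (by norm_num) x) (hξ0 x),
    hess_const_mul_log (-lam) (hξx t) hξ0 x, hcond x t]
  exact coleHopf_pointwise_iff _ _ _ _ _ _ hlam.ne' (hξ0 x)

/-- Under the condition σσᵀ = λ g R⁻¹ gᵀ (λ > 0) and the Cole–Hopf transform
J = -λ log ξ (ξ > 0 smooth), J solves the nonlinear HJB equation iff ξ solves
the corresponding linear PDE. -/
theorem stmt3 {n m k : ℕ}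
    (f : (Fin n → ℝ) → ℝ → (Fin n → ℝ))
    (g : (Fin n → ℝ) → ℝ → Matrix (Fin n) (Fin m) ℝ)
    (σ : (Fin n → ℝ) → ℝ → Matrix (Fin n) (Fin k) ℝ)
    (V : (Fin n → ℝ) → ℝ → ℝ)
    (R : (Fin n → ℝ) → ℝ → Matrix (Fin m) (Fin m) ℝ)
    (hR : ∀ x t, (R x t).PosDef) (hRsymm : ∀ x t, (R x t).IsSymm)
    (lam : ℝ) (hlam : 0 < lam)
    (hcond : ∀ x t, σ x t * (σ x t)ᵀ = lam • (g x t * (R x t)⁻¹ * (g x t)ᵀ))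
    (ξ : (Fin n → ℝ) → ℝ → ℝ) (hpos : ∀ x t, 0 < ξ x t)
    (hξx : ∀ t, ContDiff ℝ 2 (fun x => ξ x t))
    (hξt : ∀ x, ContDiff ℝ 1 (ξ x))
    (J : (Fin n → ℝ) → ℝ → ℝ)
    (hJ : J = fun x t => -lam * Real.log (ξ x t)) :
    ∀ (x : Fin n → ℝ) (t : ℝ),
      (-(deriv (J x) t)
          = -(1/2) * ((grad (fun y => J y t) x) ⬝ᵥ
                (g x t * (R x t)⁻¹ * (g x t)ᵀ).mulVec (grad (fun y => J y t) x))
            + V x t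
            + (f x t ⬝ᵥ grad (fun y => J y t) x)
            + (1/2) * Matrix.trace (σ x t * (σ x t)ᵀ * hess (fun y => J y t) x))
      ↔
      (deriv (ξ x) t
          = (V x t / lam) * ξ x t
            - (f x t ⬝ᵥ grad (fun y => ξ y t) x)
            - (1/2) * Matrix.trace (σ x t * (σ x t)ᵀ * hess (fun y => ξ y t) x)) :=
  stmt3_general f g σ V R lam hlam hcond ξ hpos hξx hξt J hJ
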